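/- Let H be an r-regular graph on n vertices. Then the join G = H ∇ (n+r)K_1 of H with n+r isolated vertices is A-exact, with least adjacency eigenvalue r - (n + r) = -n having the ±1 partition vector of {V(H), the isolated vertices} as an eigenvector. -/

import Mathlib

/-!
Write `A` for the adjacency matrix of `G = H ∇ (k + r)K₁` and `p` for the ±1 vector of the
partition `{V(H), isolated vertices}`. For `x = (u, w)` one has `xᵀAx = uᵀA_H u + 2 (∑ u) (∑ w)`.
Positive semidefiniteness of the signless Laplacian `r I + A_H`, applied to `u` minus its mean,
bounds `uᵀA_H u` from below; with Cauchy–Schwarz for `u` and `w`, completing the square gives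
`xᵀAx ≥ -k |x|²`, while `Ap = -k p`. So `-k` is the least eigenvalue. Since
`p_Sᵀ A p_S = 2|E| - 4 cut(S)` for every vertex set `S`, the same bound shows that the cut of `p`
is maximum, and `-k |V| = 2|E| - 4 mcut(G)`.
-/

open Finset Matrix BigOperators

set_option linter.unusedSectionVars false

variable {V : Type*} [Fintype V] [DecidableEq V]

/-- Number of edges of `G` with exactly one endpoint in `S` (each unordered edge counted once,
as the ordered pair going out of `S`). -/
def cutNum (G : SimpleGraph V) [DecidableRel G.Adj] (S : Finset V) : ℕ :=
  (Finset.univ.filter (fun p : V × V => G.Adj p.1 p.2 ∧ p.1 ∈ S ∧ p.2 ∉ S)).card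

/-- Number of edges of `G` with both endpoints in `S` or both outside `S`. -/
def cohNum (G : SimpleGraph V) [DecidableRel G.Adj] (S : Finset V) : ℕ :=
  G.edgeFinset.card - cutNum G S

/-- The maximum cut of `G`. -/
def mcut (G : SimpleGraph V) [DecidableRel G.Adj] : ℕ :=
  Finset.univ.sup (fun S : Finset V => cutNum G S)

/-- The ±1 partition vector of a vertex subset `S`. -/
def pvec (S : Finset V) : V → ℝ := fun v => if v ∈ S then 1 else -1

/-- The signless Laplacian matrix `Q = D + A` of a graph. -/
def signlessLap (G : SimpleGraph V) [DecidableRel G.Adj] : Matrix V V ℝ :=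
  G.degMatrix ℝ + G.adjMatrix ℝ

lemma isHermitian_adj (G : SimpleGraph V) [DecidableRel G.Adj] :
    (G.adjMatrix ℝ).IsHermitian := by
  rw [IsHermitian, conjTranspose_eq_transpose_of_trivial]
  exact SimpleGraph.isSymm_adjMatrix G

lemma isHermitian_lap (G : SimpleGraph V) [DecidableRel G.Adj] :
    (G.lapMatrix ℝ).IsHermitian := by
  rw [IsHermitian, conjTranspose_eq_transpose_of_trivial]
  exact G.isSymm_lapMatrix ℝ

lemma isHermitian_signlessLap (G : SimpleGraph V) [DecidableRel G.Adj] :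
    (signlessLap G).IsHermitian := by
  rw [IsHermitian, conjTranspose_eq_transpose_of_trivial]
  exact (G.isSymm_degMatrix ℝ).add (SimpleGraph.isSymm_adjMatrix G)

/-- The spanning subgraph of `G` consisting of the edges between `S` and its complement. -/
def crossGraph (G : SimpleGraph V) (S : Finset V) : SimpleGraph V where
  Adj u v := G.Adj u v ∧ ((u ∈ S) ↔ (v ∉ S))
  symm := ⟨fun u v h => ⟨h.1.symm, by tauto⟩⟩
  loopless := ⟨fun v h => G.loopless.1 v h.1⟩

/-- The spanning subgraph of `G` consisting of the edges inside `S` or inside its complement. -/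
def insideGraph (G : SimpleGraph V) (S : Finset V) : SimpleGraph V where
  Adj u v := G.Adj u v ∧ ((u ∈ S) ↔ (v ∈ S))
  symm := ⟨fun u v h => ⟨h.1.symm, h.2.symm⟩⟩
  loopless := ⟨fun v h => G.loopless.1 v h.1⟩

instance (G : SimpleGraph V) [DecidableRel G.Adj] (S : Finset V) :
    DecidableRel (crossGraph G S).Adj := fun _ _ => inferInstanceAs (Decidable (_ ∧ _))

instance (G : SimpleGraph V) [DecidableRel G.Adj] (S : Finset V) :
    DecidableRel (insideGraph G S).Adj := fun _ _ => inferInstanceAs (Decidable (_ ∧ _))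

/-- The second largest value (with multiplicity) of a finitely indexed family of reals. -/
noncomputable def secondLargest (f : V → ℝ) : ℝ :=
  (Multiset.sort (Finset.univ.val.map f) (· ≤ ·)).getD (Fintype.card V - 2) 0

/-- The join of two graphs: disjoint union plus all edges in between. -/
def joinGraph {α β : Type*} (H₁ : SimpleGraph α) (H₂ : SimpleGraph β) :
    SimpleGraph (α ⊕ β) where
  Adj x y :=
    match x, y with
    | Sum.inl u, Sum.inl v => H₁.Adj u v
    | Sum.inr u, Sum.inr v => H₂.Adj u v
    | Sum.inl _, Sum.inr _ => True
    | Sum.inr _, Sum.inl _ => True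
  symm := ⟨by rintro (u | u) (v | v) h <;> first | exact h.symm | trivial⟩
  loopless := ⟨by
    rintro (u | u) h
    · exact H₁.loopless.1 u h
    · exact H₂.loopless.1 u h⟩

instance {α β : Type*} (H₁ : SimpleGraph α) (H₂ : SimpleGraph β)
    [DecidableRel H₁.Adj] [DecidableRel H₂.Adj] :
    DecidableRel (joinGraph H₁ H₂).Adj := fun x y =>
  match x, y with
  | Sum.inl u, Sum.inl v => inferInstanceAs (Decidable (H₁.Adj u v))
  | Sum.inr u, Sum.inr v => inferInstanceAs (Decidable (H₂.Adj u v))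
  | Sum.inl _, Sum.inr _ => inferInstanceAs (Decidable True)
  | Sum.inr _, Sum.inl _ => inferInstanceAs (Decidable True)

lemma dotProduct_signlessLap_mulVec (G : SimpleGraph V) [DecidableRel G.Adj] (x : V → ℝ) :
    x ⬝ᵥ (signlessLap G *ᵥ x) =
      (∑ i, ∑ j, if G.Adj i j then (x i + x j) ^ 2 else 0) / 2 := by
  simp_rw [signlessLap, add_mulVec, dotProduct_add, G.dotProduct_mulVec_degMatrix,
    G.dotProduct_mulVec_adjMatrix, G.degree_eq_sum_if_adj, sum_mul, ite_mul, one_mul, zero_mul,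
    ← sum_add_distrib, ite_add_ite, add_zero]
  rw [← add_self_div_two (∑ i, ∑ j, _)]
  conv_lhs => enter [1, 2, 2, i, 2, j]; rw [if_congr (G.adj_comm i j) rfl rfl]
  conv_lhs => enter [1, 2]; rw [Finset.sum_comm]
  simp_rw [← sum_add_distrib, ite_add_ite]
  congr 2 with i
  congr 2 with j
  ring_nf

lemma SimpleGraph.IsRegularOfDegree.neg_mul_dotProduct_self_le {G : SimpleGraph V}
    [DecidableRel G.Adj] {r : ℕ} (hreg : G.IsRegularOfDegree r) (x : V → ℝ) :
    -(r : ℝ) * (x ⬝ᵥ x) ≤ x ⬝ᵥ (G.adjMatrix ℝ *ᵥ x) := by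
  have hQ : 0 ≤ x ⬝ᵥ (signlessLap G *ᵥ x) := by
    rw [dotProduct_signlessLap_mulVec]
    refine div_nonneg (sum_nonneg fun i _ => sum_nonneg fun j _ => ?_) zero_le_two
    split_ifs <;> positivity
  have hD : x ⬝ᵥ (G.degMatrix ℝ *ᵥ x) = r * (x ⬝ᵥ x) := by
    rw [G.dotProduct_mulVec_degMatrix, dotProduct, mul_sum]
    simp only [hreg _, mul_assoc]
  rw [signlessLap, add_mulVec, dotProduct_add, hD] at hQ
  linarith

lemma SimpleGraph.IsRegularOfDegree.adjMatrix_mulVec_one {α : Type*} [Fintype α]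
    {G : SimpleGraph α} [DecidableRel G.Adj] {r : ℕ} (hreg : G.IsRegularOfDegree r) :
    G.adjMatrix ℝ *ᵥ 1 = (r : ℝ) • 1 := by
  ext v
  simpa using G.adjMatrix_mulVec_const_apply_of_regular (a := (1 : ℝ)) hreg (v := v)

lemma SimpleGraph.IsRegularOfDegree.one_dotProduct_adjMatrix_mulVec {α : Type*} [Fintype α]
    {G : SimpleGraph α} [DecidableRel G.Adj] {r : ℕ} (hreg : G.IsRegularOfDegree r)
    (x : α → ℝ) : 1 ⬝ᵥ (G.adjMatrix ℝ *ᵥ x) = r * ∑ i, x i := by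
  rw [dotProduct_mulVec, ← G.transpose_adjMatrix, vecMul_transpose, hreg.adjMatrix_mulVec_one,
    smul_dotProduct, one_dotProduct, smul_eq_mul]

lemma SimpleGraph.IsRegularOfDegree.two_mul_sq_sum_le {G : SimpleGraph V} [DecidableRel G.Adj]
    {r : ℕ} (hreg : G.IsRegularOfDegree r) (x : V → ℝ) :
    2 * r * (∑ i, x i) ^ 2 ≤
      Fintype.card V * (x ⬝ᵥ (G.adjMatrix ℝ *ᵥ x) + r * (x ⬝ᵥ x)) := by
  set k : ℝ := (Fintype.card V : ℝ)
  set s := ∑ i, x i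
  rcases (Fintype.card V).eq_zero_or_pos with hk | hk
  · have : IsEmpty V := Fintype.card_eq_zero_iff.mp hk
    simp [s, k]
  -- the bound for `G` applied to the component of `x` orthogonal to the constants
  have h := hreg.neg_mul_dotProduct_self_le (k • x - s • 1)
  simp only [mulVec_sub, mulVec_smul, dotProduct_sub, sub_dotProduct, smul_dotProduct,
    dotProduct_smul, hreg.adjMatrix_mulVec_one, hreg.one_dotProduct_adjMatrix_mulVec,
    smul_eq_mul] at h
  simp only [dotProduct_one, one_dotProduct] at h
  have hk' : (0 : ℝ) < k := by simp [k, hk]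
  have hone : ∑ i, (1 : V → ℝ) i = k := by simp [k]
  rw [hone, show ∑ i, x i = s from rfl] at h
  nlinarith

lemma sq_sum_le_card_mul_dotProduct_self {ι : Type*} [Fintype ι] (x : ι → ℝ) :
    (∑ i, x i) ^ 2 ≤ Fintype.card ι * (x ⬝ᵥ x) := by
  simpa [dotProduct, sq] using sq_sum_le_card_mul_sum_sq (s := univ) (f := x)

section Join

variable {α β : Type*} (H₁ : SimpleGraph α) (H₂ : SimpleGraph β)

@[simp] lemma joinGraph_adj_inl_inl {u v : α} :
    (joinGraph H₁ H₂).Adj (.inl u) (.inl v) ↔ H₁.Adj u v :=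
  Iff.rfl

@[simp] lemma joinGraph_adj_inr_inr {u v : β} :
    (joinGraph H₁ H₂).Adj (.inr u) (.inr v) ↔ H₂.Adj u v :=
  Iff.rfl

@[simp] lemma joinGraph_adj_inl_inr {u : α} {v : β} : (joinGraph H₁ H₂).Adj (.inl u) (.inr v) :=
  trivial

@[simp] lemma joinGraph_adj_inr_inl {u : β} {v : α} : (joinGraph H₁ H₂).Adj (.inr u) (.inl v) :=
  trivial

variable [Fintype α] [Fintype β] [DecidableRel H₁.Adj] [DecidableRel H₂.Adj]

lemma joinGraph_adjMatrix_mulVec_inl (x : α ⊕ β → ℝ) (i : α) :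
    ((joinGraph H₁ H₂).adjMatrix ℝ *ᵥ x) (Sum.inl i) =
      (H₁.adjMatrix ℝ *ᵥ (x ∘ Sum.inl)) i + ∑ j, x (Sum.inr j) := by
  simp [mulVec, dotProduct, Fintype.sum_sum_type, SimpleGraph.adjMatrix_apply]

lemma joinGraph_adjMatrix_mulVec_inr (x : α ⊕ β → ℝ) (j : β) :
    ((joinGraph H₁ H₂).adjMatrix ℝ *ᵥ x) (Sum.inr j) =
      (H₂.adjMatrix ℝ *ᵥ (x ∘ Sum.inr)) j + ∑ i, x (Sum.inl i) := by
  simp [mulVec, dotProduct, Fintype.sum_sum_type, SimpleGraph.adjMatrix_apply, add_comm]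

lemma joinGraph_dotProduct_adjMatrix_mulVec (x : α ⊕ β → ℝ) :
    x ⬝ᵥ ((joinGraph H₁ H₂).adjMatrix ℝ *ᵥ x) =
      (x ∘ Sum.inl) ⬝ᵥ (H₁.adjMatrix ℝ *ᵥ (x ∘ Sum.inl)) +
        (x ∘ Sum.inr) ⬝ᵥ (H₂.adjMatrix ℝ *ᵥ (x ∘ Sum.inr)) +
        2 * (∑ i, x (Sum.inl i)) * ∑ j, x (Sum.inr j) := by
  simp only [dotProduct, Fintype.sum_sum_type, joinGraph_adjMatrix_mulVec_inl,
    joinGraph_adjMatrix_mulVec_inr, mul_add, sum_add_distrib, ← sum_mul,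
    Function.comp_apply]
  ring

end Join

lemma joinGraph_bot_neg_mul_dotProduct_self_le {α β : Type*} [Fintype α] [DecidableEq α]
    [Fintype β] {H : SimpleGraph α} [DecidableRel H.Adj] {r : ℕ} (hreg : H.IsRegularOfDegree r)
    (hβ : Fintype.card β ≤ Fintype.card α + r) (x : α ⊕ β → ℝ) :
    -(Fintype.card α : ℝ) * (x ⬝ᵥ x) ≤
      x ⬝ᵥ ((joinGraph H (⊥ : SimpleGraph β)).adjMatrix ℝ *ᵥ x) := by
  have hxx : x ⬝ᵥ x = (x ∘ Sum.inl) ⬝ᵥ (x ∘ Sum.inl) + (x ∘ Sum.inr) ⬝ᵥ (x ∘ Sum.inr) := by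
    simp only [dotProduct, Fintype.sum_sum_type, Function.comp_apply]
  rw [joinGraph_dotProduct_adjMatrix_mulVec, SimpleGraph.adjMatrix_bot, zero_mulVec,
    dotProduct_zero, add_zero, hxx]
  rcases isEmpty_or_nonempty α with hα | ⟨⟨v⟩⟩
  · simp
  have hrk : (r : ℝ) < Fintype.card α := by exact_mod_cast hreg v ▸ H.degree_lt_card_verts v
  have hβ' : (Fintype.card β : ℝ) ≤ Fintype.card α + r := by exact_mod_cast hβ
  have hW : 0 ≤ (x ∘ Sum.inr) ⬝ᵥ (x ∘ Sum.inr) := sum_nonneg fun _ _ => mul_self_nonneg _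
  have h1 := hreg.two_mul_sq_sum_le (x ∘ Sum.inl)
  have h2 := sq_sum_le_card_mul_dotProduct_self (x ∘ Sum.inl)
  have h3 := sq_sum_le_card_mul_dotProduct_self (x ∘ Sum.inr)
  simp only [Function.comp_apply] at h1 h2 h3 ⊢
  set k : ℝ := (Fintype.card α : ℝ)
  set s := ∑ i, x (Sum.inl i)
  set t := ∑ j, x (Sum.inr j)
  set Q := (x ∘ Sum.inl) ⬝ᵥ (H.adjMatrix ℝ *ᵥ (x ∘ Sum.inl))
  set U := (x ∘ Sum.inl) ⬝ᵥ (x ∘ Sum.inl)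
  set W := (x ∘ Sum.inr) ⬝ᵥ (x ∘ Sum.inr)
  have hk : 0 < k := lt_of_le_of_lt r.cast_nonneg hrk
  have e1 : 0 ≤ (k + r) * (k * (Q + r * U) - 2 * r * s ^ 2) :=
    mul_nonneg (by positivity) (by linarith)
  have e2 : 0 ≤ (k + r) * (k - r) * (k * U - s ^ 2) :=
    mul_nonneg (mul_nonneg (by positivity) (by linarith)) (by linarith)
  have e3 : 0 ≤ k ^ 2 * ((k + r) * W - t ^ 2) :=
    mul_nonneg (by positivity) (by nlinarith)
  -- completing the square in `s` and `t`
  have key : k * (k + r) * (Q + 2 * s * t + k * (U + W)) =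
      (k + r) * (k * (Q + r * U) - 2 * r * s ^ 2) + (k + r) * (k - r) * (k * U - s ^ 2) +
        k ^ 2 * ((k + r) * W - t ^ 2) + ((k + r) * s + k * t) ^ 2 := by ring
  have hP : 0 ≤ Q + 2 * s * t + k * (U + W) := by
    refine nonneg_of_mul_nonneg_right (a := k * (k + r)) ?_ (by positivity)
    rw [key]
    exact add_nonneg (add_nonneg (add_nonneg e1 e2) e3) (sq_nonneg _)
  linarith

lemma joinGraph_bot_adjMatrix_mulVec_pvec {α β : Type*} [Fintype α] [DecidableEq α] [Fintype β]
    [DecidableEq β] {H : SimpleGraph α} [DecidableRel H.Adj] {r : ℕ}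
    (hreg : H.IsRegularOfDegree r) (hβ : Fintype.card β = Fintype.card α + r) :
    (joinGraph H (⊥ : SimpleGraph β)).adjMatrix ℝ *ᵥ pvec (univ.image Sum.inl) =
      (-(Fintype.card α : ℝ)) • pvec (univ.image Sum.inl) := by
  have hinl : pvec (univ.image (Sum.inl : α → α ⊕ β)) ∘ Sum.inl = Function.const α (1 : ℝ) := by
    ext; simp [pvec]
  have hinr : pvec (univ.image (Sum.inl : α → α ⊕ β)) ∘ Sum.inr = Function.const β (-1 : ℝ) := by
    ext; simp [pvec]
  ext (i | j)
  · rw [joinGraph_adjMatrix_mulVec_inl, hinl, H.adjMatrix_mulVec_const_apply_of_regular hreg]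
    simp [pvec, hβ]
  · rw [joinGraph_adjMatrix_mulVec_inr, hinr, SimpleGraph.adjMatrix_bot, zero_mulVec]
    simp [pvec]

section Eigenvalues

variable {n : Type*} [Fintype n] [DecidableEq n] {A : Matrix n n ℝ}

lemma Matrix.IsHermitian.le_eigenvalues_of_forall_le_dotProduct (hA : A.IsHermitian) {c : ℝ}
    (h : ∀ x : n → ℝ, c * (x ⬝ᵥ x) ≤ x ⬝ᵥ (A *ᵥ x)) (i : n) : c ≤ hA.eigenvalues i := by
  have hv : ⇑(hA.eigenvectorBasis i) ⬝ᵥ ⇑(hA.eigenvectorBasis i) = 1 := by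
    have := orthonormal_iff_ite.mp hA.eigenvectorBasis.orthonormal i i
    rwa [EuclideanSpace.inner_eq_star_dotProduct, if_pos rfl, star_trivial, dotProduct_comm] at this
  simpa [hA.mulVec_eigenvectorBasis, hv] using h (hA.eigenvectorBasis i)

lemma Matrix.IsHermitian.exists_eigenvalues_eq (hA : A.IsHermitian) {μ : ℝ} {v : n → ℝ}
    (hv : v ≠ 0) (hAv : A *ᵥ v = μ • v) : ∃ i, hA.eigenvalues i = μ := by
  have hμ : Module.End.HasEigenvalue (Matrix.toLin' A) μ :=
    Module.End.hasEigenvalue_of_hasEigenvector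
      ⟨Module.End.mem_eigenspace_iff.mpr (by rw [Matrix.toLin'_apply, hAv]), hv⟩
  have hspec : μ ∈ spectrum ℝ A := by
    rw [← AlgEquiv.spectrum_eq (Matrix.toLinAlgEquiv' : Matrix n n ℝ ≃ₐ[ℝ] _) A]
    exact hμ.mem_spectrum
  rwa [hA.spectrum_real_eq_range_eigenvalues] at hspec

lemma Matrix.IsHermitian.iInf_eigenvalues_eq (hA : A.IsHermitian) {μ : ℝ}
    (h : ∀ x : n → ℝ, μ * (x ⬝ᵥ x) ≤ x ⬝ᵥ (A *ᵥ x)) {v : n → ℝ} (hv : v ≠ 0)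
    (hAv : A *ᵥ v = μ • v) : ⨅ i, hA.eigenvalues i = μ := by
  obtain ⟨i, hi⟩ := hA.exists_eigenvalues_eq hv hAv
  have : Nonempty n := ⟨i⟩
  have hle := hA.le_eigenvalues_of_forall_le_dotProduct h
  exact le_antisymm (hi ▸ ciInf_le ⟨μ, Set.forall_mem_range.2 hle⟩ i) (le_ciInf hle)

end Eigenvalues

section Cut

lemma pvec_dotProduct_self (S : Finset V) : pvec S ⬝ᵥ pvec S = Fintype.card V := by
  have h : ∀ v, pvec S v * pvec S v = 1 := fun v => by unfold pvec; split_ifs <;> norm_num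
  simp [dotProduct, h]

lemma pvec_ne_zero [Nonempty V] (S : Finset V) : pvec S ≠ 0 := fun h => by
  have := congrFun h (Classical.arbitrary V)
  unfold pvec at this
  split_ifs at this <;> norm_num at this

lemma cutNum_eq_sum (G : SimpleGraph V) [DecidableRel G.Adj] (S : Finset V) :
    (cutNum G S : ℝ) = ∑ a, ∑ b, if G.Adj a b ∧ a ∈ S ∧ b ∉ S then 1 else 0 := by
  rw [cutNum, card_filter, ← univ_product_univ, sum_product]
  push_cast
  rfl

lemma cutNum_eq_sum_swap (G : SimpleGraph V) [DecidableRel G.Adj] (S : Finset V) :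
    (cutNum G S : ℝ) = ∑ a, ∑ b, if G.Adj a b ∧ a ∉ S ∧ b ∈ S then 1 else 0 := by
  rw [cutNum_eq_sum, sum_comm]
  refine sum_congr rfl fun a _ => sum_congr rfl fun b _ => if_congr ?_ rfl rfl
  rw [G.adj_comm]
  tauto

lemma pvec_dotProduct_adjMatrix_mulVec (G : SimpleGraph V) [DecidableRel G.Adj] (S : Finset V) :
    pvec S ⬝ᵥ (G.adjMatrix ℝ *ᵥ pvec S) = 2 * #G.edgeFinset - 4 * cutNum G S := by
  have h : ∀ a b, (if G.Adj a b then pvec S a * pvec S b else 0) =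
      (if G.Adj a b then 1 else 0) - 2 * (if G.Adj a b ∧ a ∈ S ∧ b ∉ S then 1 else 0) -
        2 * (if G.Adj a b ∧ a ∉ S ∧ b ∈ S then 1 else 0) := fun a b => by
    unfold pvec; split_ifs <;> simp_all <;> norm_num
  have hE : ∑ a, ∑ b, (if G.Adj a b then 1 else 0 : ℝ) = 2 * #G.edgeFinset := by
    simp_rw [← G.degree_eq_sum_if_adj]
    exact_mod_cast G.sum_degrees_eq_twice_card_edges
  simp only [G.dotProduct_mulVec_adjMatrix, h, sum_sub_distrib, ← mul_sum, hE,
    ← cutNum_eq_sum, ← cutNum_eq_sum_swap]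
  ring

variable {G : SimpleGraph V} [DecidableRel G.Adj] {S : Finset V} {μ : ℝ}

lemma mul_card_eq_of_adjMatrix_mulVec_pvec (hS : G.adjMatrix ℝ *ᵥ pvec S = μ • pvec S) :
    μ * Fintype.card V = 2 * #G.edgeFinset - 4 * cutNum G S := by
  rw [← pvec_dotProduct_adjMatrix_mulVec, hS, dotProduct_smul, pvec_dotProduct_self, smul_eq_mul]

lemma mcut_eq_cutNum_of_adjMatrix_mulVec_pvec
    (h : ∀ x : V → ℝ, μ * (x ⬝ᵥ x) ≤ x ⬝ᵥ (G.adjMatrix ℝ *ᵥ x))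
    (hS : G.adjMatrix ℝ *ᵥ pvec S = μ • pvec S) : mcut G = cutNum G S := by
  refine le_antisymm (Finset.sup_le fun T _ => ?_) (Finset.le_sup (mem_univ S))
  have hT := h (pvec T)
  rw [pvec_dotProduct_self, pvec_dotProduct_adjMatrix_mulVec] at hT
  have := mul_card_eq_of_adjMatrix_mulVec_pvec hS
  exact_mod_cast (by linarith : (cutNum G T : ℝ) ≤ cutNum G S)

lemma eq_two_div_card_mul_of_adjMatrix_mulVec_pvec [Nonempty V]
    (h : ∀ x : V → ℝ, μ * (x ⬝ᵥ x) ≤ x ⬝ᵥ (G.adjMatrix ℝ *ᵥ x))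
    (hS : G.adjMatrix ℝ *ᵥ pvec S = μ • pvec S) :
    μ = 2 / Fintype.card V * (#G.edgeFinset - 2 * mcut G) := by
  rw [mcut_eq_cutNum_of_adjMatrix_mulVec_pvec h hS]
  field_simp
  linarith [mul_card_eq_of_adjMatrix_mulVec_pvec hS]

end Cut

/-- The join of an `r`-regular graph on `k` vertices with `k + r` isolated vertices is `A`-exact,
with least adjacency eigenvalue `r - (k + r) = -k` whose eigenvector is the ±1 partition vector. -/
theorem stmt19 {k r : ℕ} (H : SimpleGraph (Fin k)) [DecidableRel H.Adj]
    (hreg : H.IsRegularOfDegree r) :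
    (⨅ i, (isHermitian_adj (joinGraph H (⊥ : SimpleGraph (Fin (k + r))))).eigenvalues i) =
        -(k : ℝ) ∧
      (joinGraph H (⊥ : SimpleGraph (Fin (k + r)))).adjMatrix ℝ *ᵥ
          pvec (Finset.univ.image Sum.inl) =
        (-(k : ℝ)) • pvec (Finset.univ.image Sum.inl) ∧
      (⨅ i, (isHermitian_adj (joinGraph H (⊥ : SimpleGraph (Fin (k + r))))).eigenvalues i) =
        2 / (Fintype.card (Fin k ⊕ Fin (k + r)) : ℝ) *
          (((joinGraph H (⊥ : SimpleGraph (Fin (k + r)))).edgeFinset.card : ℝ) -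
            2 * mcut (joinGraph H (⊥ : SimpleGraph (Fin (k + r))))) := by
  have hcard : Fintype.card (Fin (k + r)) = Fintype.card (Fin k) + r := by simp
  have hlb := joinGraph_bot_neg_mul_dotProduct_self_le hreg hcard.le
  have hvec := joinGraph_bot_adjMatrix_mulVec_pvec hreg hcard
  simp only [Fintype.card_fin] at hlb hvec
  rcases isEmpty_or_nonempty (Fin k ⊕ Fin (k + r)) with hV | hV
  · have hcard0 : Fintype.card (Fin k ⊕ Fin (k + r)) = 0 := Fintype.card_eq_zero
    rw [Fintype.card_sum, Fintype.card_fin, Fintype.card_fin] at hcard0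
    obtain ⟨rfl, rfl⟩ : k = 0 ∧ r = 0 := by omega
    simpa using hvec
  have hinf := (isHermitian_adj _).iInf_eigenvalues_eq hlb (pvec_ne_zero _) hvec
  exact ⟨hinf, hvec, hinf.trans (eq_two_div_card_mul_of_adjMatrix_mulVec_pvec hlb hvec)⟩
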